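/- arXiv:1410.7312 — 2 statements merged into one kernel-verified Lean document; each statement's English description precedes it below -/
import Mathlib

section
/- A permutation is separable if and only if it avoids both of the patterns 2413 and 3142. -/
open Equiv

def occursAt {k n : ℕ} (σ : Perm (Fin k)) (π : Perm (Fin n)) (f : Fin k → Fin n) : Prop :=
  StrictMono f ∧ ∀ i j, σ i < σ j ↔ π (f i) < π (f j)

noncomputable def occCount {k n : ℕ} (σ : Perm (Fin k)) (π : Perm (Fin n)) : ℕ :=
  Nat.card {f : Fin k → Fin n // occursAt σ π f}

def Contains {k n : ℕ} (σ : Perm (Fin k)) (π : Perm (Fin n)) : Prop :=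
  ∃ f, occursAt σ π f

def directSum {m n : ℕ} (σ : Perm (Fin m)) (τ : Perm (Fin n)) : Perm (Fin (m + n)) :=
  finSumFinEquiv.symm.trans ((Equiv.sumCongr σ τ).trans finSumFinEquiv)

def skewSum {m n : ℕ} (σ : Perm (Fin m)) (τ : Perm (Fin n)) : Perm (Fin (m + n)) :=
  finSumFinEquiv.symm.trans (((Equiv.sumCongr σ τ).trans (Equiv.sumComm (Fin m) (Fin n))).trans
    (finSumFinEquiv.trans (finCongr (Nat.add_comm n m))))

inductive IsSepPerm : {n : ℕ} → Perm (Fin n) → Prop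
  | single : IsSepPerm (1 : Perm (Fin 1))
  | dsum {m n : ℕ} {σ : Perm (Fin m)} {τ : Perm (Fin n)} :
      IsSepPerm σ → IsSepPerm τ → IsSepPerm (directSum σ τ)
  | ssum {m n : ℕ} {σ : Perm (Fin m)} {τ : Perm (Fin n)} :
      IsSepPerm σ → IsSepPerm τ → IsSepPerm (skewSum σ τ)

/-- The permutation 2413. -/
def p2413 : Perm (Fin 4) := ⟨![1, 3, 0, 2], ![2, 0, 3, 1], by decide, by decide⟩

/-- The permutation 3142. -/
def p3142 : Perm (Fin 4) := ⟨![2, 0, 3, 1], ![1, 3, 0, 2], by decide, by decide⟩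


lemma directSum_castAdd {a b : ℕ} (σ : Perm (Fin a)) (τ : Perm (Fin b)) (i : Fin a) :
    directSum σ τ (Fin.castAdd b i) = Fin.castAdd b (σ i) := by
  simp [directSum]

lemma directSum_natAdd {a b : ℕ} (σ : Perm (Fin a)) (τ : Perm (Fin b)) (j : Fin b) :
    directSum σ τ (Fin.natAdd a j) = Fin.natAdd a (τ j) := by
  simp [directSum]

lemma skewSum_castAdd {a b : ℕ} (σ : Perm (Fin a)) (τ : Perm (Fin b)) (i : Fin a) :
    (skewSum σ τ (Fin.castAdd b i)).val = b + (σ i).val := by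
  simp [skewSum]; omega

lemma skewSum_natAdd {a b : ℕ} (σ : Perm (Fin a)) (τ : Perm (Fin b)) (j : Fin b) :
    (skewSum σ τ (Fin.natAdd a j)).val = (τ j).val := by
  simp [skewSum]

lemma key_decide : ∀ (ρ g : Perm (Fin 4)),
    (∀ i j : Fin 4, i < j → (ρ j < ρ i ↔ ((g i).val + 1 = (g j).val ∨ (g j).val + 1 = (g i).val)))
    → ρ = p2413 ∨ ρ = p3142 := by decide

lemma hp_2413 : ∀ t : ℕ, t = 1 ∨ t = 2 ∨ t = 3 →
    ¬ ∀ i j : Fin 4, i.val < t → t ≤ j.val → p2413 i < p2413 j := by rintro t (rfl|rfl|rfl) <;> decide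
lemma hp_3142 : ∀ t : ℕ, t = 1 ∨ t = 2 ∨ t = 3 →
    ¬ ∀ i j : Fin 4, i.val < t → t ≤ j.val → p3142 i < p3142 j := by rintro t (rfl|rfl|rfl) <;> decide
lemma hq_2413 : ∀ t : ℕ, t = 1 ∨ t = 2 ∨ t = 3 →
    ¬ ∀ i j : Fin 4, i.val < t → t ≤ j.val → p2413 j < p2413 i := by rintro t (rfl|rfl|rfl) <;> decide
lemma hq_3142 : ∀ t : ℕ, t = 1 ∨ t = 2 ∨ t = 3 →
    ¬ ∀ i j : Fin 4, i.val < t → t ≤ j.val → p3142 j < p3142 i := by rintro t (rfl|rfl|rfl) <;> decide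

section valbounds
variable {a b : ℕ} {σ : Perm (Fin a)} {τ : Perm (Fin b)}

lemma directSum_val_lt {x : Fin (a+b)} (hx : x.val < a) : (directSum σ τ x).val < a := by
  have h : x = Fin.castAdd b ⟨x.val, hx⟩ := Fin.ext rfl
  rw [h, directSum_castAdd]; simpa using (σ _).isLt

lemma directSum_val_ge {x : Fin (a+b)} (hx : a ≤ x.val) : a ≤ (directSum σ τ x).val := by
  have h : x = Fin.natAdd a ⟨x.val - a, by have := x.isLt; omega⟩ := Fin.ext (by simp; omega)
  rw [h, directSum_natAdd]; simp

lemma skewSum_val_ge {x : Fin (a+b)} (hx : x.val < a) : b ≤ (skewSum σ τ x).val := by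
  have h : x = Fin.castAdd b ⟨x.val, hx⟩ := Fin.ext rfl
  rw [h]; rw [skewSum_castAdd]; omega

lemma skewSum_val_lt {x : Fin (a+b)} (hx : a ≤ x.val) : (skewSum σ τ x).val < b := by
  have h : x = Fin.natAdd a ⟨x.val - a, by have := x.isLt; omega⟩ := Fin.ext (by simp; omega)
  rw [h]; rw [skewSum_natAdd]; exact (τ _).isLt

lemma contains_directSum_left {p : Perm (Fin 4)}
    (h : Contains p σ) : Contains p (directSum σ τ) := by
  obtain ⟨f, hf, hrel⟩ := h
  refine ⟨fun i => Fin.castAdd b (f i), ?_, ?_⟩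
  · intro i j hij; have := hf hij; simp only [Fin.lt_def] at *; simpa using this
  · intro i j
    rw [hrel i j, directSum_castAdd, directSum_castAdd]
    simp only [Fin.lt_def, Fin.coe_castAdd]

lemma contains_directSum_right {p : Perm (Fin 4)}
    (h : Contains p τ) : Contains p (directSum σ τ) := by
  obtain ⟨f, hf, hrel⟩ := h
  refine ⟨fun i => Fin.natAdd a (f i), ?_, ?_⟩
  · intro i j hij; have := hf hij; simp only [Fin.lt_def, Fin.coe_natAdd] at *; omega
  · intro i j
    rw [hrel i j, directSum_natAdd, directSum_natAdd]
    simp only [Fin.lt_def, Fin.coe_natAdd]; omega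

lemma contains_skewSum_left {p : Perm (Fin 4)}
    (h : Contains p σ) : Contains p (skewSum σ τ) := by
  obtain ⟨f, hf, hrel⟩ := h
  refine ⟨fun i => Fin.castAdd b (f i), ?_, ?_⟩
  · intro i j hij; have := hf hij; simp only [Fin.lt_def] at *; simpa using this
  · intro i j
    rw [hrel i j]
    simp only [Fin.lt_def, skewSum_castAdd]; omega

lemma contains_skewSum_right {p : Perm (Fin 4)}
    (h : Contains p τ) : Contains p (skewSum σ τ) := by
  obtain ⟨f, hf, hrel⟩ := h
  refine ⟨fun i => Fin.natAdd a (f i), ?_, ?_⟩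
  · intro i j hij; have := hf hij; simp only [Fin.lt_def, Fin.coe_natAdd] at *; omega
  · intro i j
    rw [hrel i j]
    simp only [Fin.lt_def, skewSum_natAdd]

lemma contains_directSum_elim {p : Perm (Fin 4)}
    (hp : ∀ t : ℕ, t = 1 ∨ t = 2 ∨ t = 3 →
      ¬ ∀ i j : Fin 4, i.val < t → t ≤ j.val → p i < p j)
    (h : Contains p (directSum σ τ)) : Contains p σ ∨ Contains p τ := by
  obtain ⟨f, hf, hrel⟩ := h
  have hmono : ∀ i j : Fin 4, i ≤ j → (f i).val ≤ (f j).val := by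
    intro i j hij
    rcases eq_or_lt_of_le hij with rfl|h
    · exact le_refl _
    · exact (hf h).le
  by_cases h3 : (f 3).val < a
  · left
    have hall : ∀ i : Fin 4, (f i).val < a := fun i =>
      lt_of_le_of_lt (hmono i 3 (Fin.le_def.mpr (by omega))) h3
    refine ⟨fun i => ⟨(f i).val, hall i⟩, ?_, ?_⟩
    · intro i j hij; have := hf hij; simp only [Fin.lt_def] at *; exact this
    · intro i j
      rw [hrel i j]
      have hfe : ∀ i, f i = Fin.castAdd b ⟨(f i).val, hall i⟩ := fun i => Fin.ext rfl
      rw [hfe i, hfe j, directSum_castAdd, directSum_castAdd]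
      simp only [Fin.lt_def, Fin.coe_castAdd]
  · push_neg at h3
    by_cases h0 : a ≤ (f 0).val
    · right
      have hall : ∀ i : Fin 4, a ≤ (f i).val := fun i =>
        le_trans h0 (hmono 0 i (Fin.le_def.mpr (by omega)))
      refine ⟨fun i => ⟨(f i).val - a, by have := (f i).isLt; omega⟩, ?_, ?_⟩
      · intro i j hij; have := hf hij; simp only [Fin.lt_def] at *
        have := hall i; omega
      · intro i j
        rw [hrel i j]
        have hfe : ∀ i, f i = Fin.natAdd a ⟨(f i).val - a, by have := (f i).isLt; omega⟩ :=
          fun i => Fin.ext (by simp; have := hall i; omega)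
        rw [hfe i, hfe j, directSum_natAdd, directSum_natAdd]
        simp only [Fin.lt_def, Fin.coe_natAdd]; omega
    · exfalso
      push_neg at h0
      have key : ∀ t : ℕ, (t = 1 ∨ t = 2 ∨ t = 3) →
          (∀ i : Fin 4, i.val < t → (f i).val < a) →
          (∀ j : Fin 4, t ≤ j.val → a ≤ (f j).val) → False := by
        intro t ht hlow hhigh
        refine hp t ht (fun i j hi hj => (hrel i j).mpr ?_)
        have v1 : (directSum σ τ (f i)).val < a := directSum_val_lt (hlow i hi)
        have v2 : a ≤ (directSum σ τ (f j)).val := directSum_val_ge (hhigh j hj)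
        simp only [Fin.lt_def]; omega
      rcases le_or_gt a (f 1).val with h1|h1
      · refine key 1 (by omega) (fun i hi => ?_) (fun j hj => ?_)
        · have : i = 0 := Fin.ext (by omega); rw [this]; exact h0
        · exact le_trans h1 (hmono 1 j (Fin.le_def.mpr (by omega)))
      · rcases le_or_gt a (f 2).val with h2|h2
        · refine key 2 (by omega) (fun i hi => ?_) (fun j hj => ?_)
          · exact lt_of_le_of_lt (hmono i 1 (Fin.le_def.mpr (by omega))) h1
          · exact le_trans h2 (hmono 2 j (Fin.le_def.mpr (by omega)))
        · refine key 3 (by omega) (fun i hi => ?_) (fun j hj => ?_)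
          · exact lt_of_le_of_lt (hmono i 2 (Fin.le_def.mpr (by omega))) h2
          · have : j = 3 := Fin.ext (by have := j.isLt; omega); rw [this]; exact h3

lemma contains_skewSum_elim {p : Perm (Fin 4)}
    (hp : ∀ t : ℕ, t = 1 ∨ t = 2 ∨ t = 3 →
      ¬ ∀ i j : Fin 4, i.val < t → t ≤ j.val → p j < p i)
    (h : Contains p (skewSum σ τ)) : Contains p σ ∨ Contains p τ := by
  obtain ⟨f, hf, hrel⟩ := h
  have hmono : ∀ i j : Fin 4, i ≤ j → (f i).val ≤ (f j).val := by
    intro i j hij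
    rcases eq_or_lt_of_le hij with rfl|h
    · exact le_refl _
    · exact (hf h).le
  by_cases h3 : (f 3).val < a
  · left
    have hall : ∀ i : Fin 4, (f i).val < a := fun i =>
      lt_of_le_of_lt (hmono i 3 (Fin.le_def.mpr (by omega))) h3
    refine ⟨fun i => ⟨(f i).val, hall i⟩, ?_, ?_⟩
    · intro i j hij; have := hf hij; simp only [Fin.lt_def] at *; exact this
    · intro i j
      rw [hrel i j]
      have hfe : ∀ i, f i = Fin.castAdd b ⟨(f i).val, hall i⟩ := fun i => Fin.ext rfl
      rw [hfe i, hfe j]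
      simp only [Fin.lt_def, skewSum_castAdd]; omega
  · push_neg at h3
    by_cases h0 : a ≤ (f 0).val
    · right
      have hall : ∀ i : Fin 4, a ≤ (f i).val := fun i =>
        le_trans h0 (hmono 0 i (Fin.le_def.mpr (by omega)))
      refine ⟨fun i => ⟨(f i).val - a, by have := (f i).isLt; omega⟩, ?_, ?_⟩
      · intro i j hij; have := hf hij; simp only [Fin.lt_def] at *
        have := hall i; omega
      · intro i j
        rw [hrel i j]
        have hfe : ∀ i, f i = Fin.natAdd a ⟨(f i).val - a, by have := (f i).isLt; omega⟩ :=
          fun i => Fin.ext (by simp; have := hall i; omega)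
        rw [hfe i, hfe j]
        simp only [Fin.lt_def, skewSum_natAdd]
    · exfalso
      push_neg at h0
      have key : ∀ t : ℕ, (t = 1 ∨ t = 2 ∨ t = 3) →
          (∀ i : Fin 4, i.val < t → (f i).val < a) →
          (∀ j : Fin 4, t ≤ j.val → a ≤ (f j).val) → False := by
        intro t ht hlow hhigh
        refine hp t ht (fun i j hi hj => (hrel j i).mpr ?_)
        have v1 : b ≤ (skewSum σ τ (f i)).val := skewSum_val_ge (hlow i hi)
        have v2 : (skewSum σ τ (f j)).val < b := skewSum_val_lt (hhigh j hj)
        simp only [Fin.lt_def]; omega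
      rcases le_or_gt a (f 1).val with h1|h1
      · refine key 1 (by omega) (fun i hi => ?_) (fun j hj => ?_)
        · have : i = 0 := Fin.ext (by omega); rw [this]; exact h0
        · exact le_trans h1 (hmono 1 j (Fin.le_def.mpr (by omega)))
      · rcases le_or_gt a (f 2).val with h2|h2
        · refine key 2 (by omega) (fun i hi => ?_) (fun j hj => ?_)
          · exact lt_of_le_of_lt (hmono i 1 (Fin.le_def.mpr (by omega))) h1
          · exact le_trans h2 (hmono 2 j (Fin.le_def.mpr (by omega)))
        · refine key 3 (by omega) (fun i hi => ?_) (fun j hj => ?_)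
          · exact lt_of_le_of_lt (hmono i 2 (Fin.le_def.mpr (by omega))) h2
          · have : j = 3 := Fin.ext (by have := j.isLt; omega); rw [this]; exact h3
end valbounds



def P4Free {V : Type*} (G : SimpleGraph V) : Prop :=
  ∀ a b c d : V, a ≠ c → a ≠ d → b ≠ d → G.Adj a b → G.Adj b c → G.Adj c d →
    ¬ G.Adj a c → ¬ G.Adj a d → ¬ G.Adj b d → False

lemma P4Free.compl {V : Type*} {G : SimpleGraph V} (h : P4Free G) : P4Free Gᶜ := by
  intro a b c d hac had hbd hab hbc hcd hnac hnad hnbd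
  have gac : G.Adj a c := by by_contra hg; exact hnac ⟨hac, hg⟩
  have gad : G.Adj a d := by by_contra hg; exact hnad ⟨had, hg⟩
  have gbd : G.Adj b d := by by_contra hg; exact hnbd ⟨hbd, hg⟩
  exact h c a d b hcd.ne (hbc.ne).symm hab.ne
    gac.symm gad gbd.symm (fun hg => hcd.2 hg) (fun hg => hbc.2 hg.symm)
    (fun hg => hab.2 hg)

lemma exists_adj_of_reachable_ne {V : Type*} {G : SimpleGraph V} {u w : V}
    (h : G.Reachable u w) (hne : u ≠ w) : ∃ x, G.Adj u x := by
  obtain ⟨p⟩ := h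
  cases p with
  | nil => exact absurd rfl hne
  | cons h' p => exact ⟨_, h'⟩

lemma walk_to_v {V : Type*} {G : SimpleGraph V} (v : V) :
    ∀ {u w : V} (_ : G.Walk u w) (hu : u ≠ v) (_ : w = v),
      ∃ x : {x : V // x ≠ v}, G.Adj x.val v ∧
        (G.comap (Subtype.val : {x : V // x ≠ v} → V)).Reachable ⟨u, hu⟩ x := by
  intro u w p
  induction p with
  | nil => intro hu hw; exact absurd hw hu
  | @cons u u' _ h p ih =>
    intro hu hw
    by_cases hu' : u' = v
    · exact ⟨⟨u, hu⟩, hu' ▸ h, SimpleGraph.Reachable.refl _⟩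
    · obtain ⟨x, hx1, hx2⟩ := ih hu' hw
      refine ⟨x, hx1, SimpleGraph.Reachable.trans ?_ hx2⟩
      exact SimpleGraph.Adj.reachable (by exact h :
        (G.comap (Subtype.val : {x : V // x ≠ v} → V)).Adj ⟨u, hu⟩ ⟨u', hu'⟩)

lemma walk_transition {α : Type*} {H : SimpleGraph α} (P : α → Prop) :
    ∀ {u w : α} (_ : H.Walk u w), ¬ P u → P w →
      ∃ x y, H.Adj x y ∧ ¬ P x ∧ P y ∧ H.Reachable u x := by
  intro u w p
  induction p with
  | nil => intro h1 h2; exact absurd h2 h1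
  | @cons u u' _ h p ih =>
    intro h1 h2
    by_cases hP : P u'
    · exact ⟨u, u', h, h1, hP, SimpleGraph.Reachable.refl _⟩
    · obtain ⟨x, y, hxy, hx, hy, hr⟩ := ih hP h2
      exact ⟨x, y, hxy, hx, hy, SimpleGraph.Reachable.trans (SimpleGraph.Adj.reachable h) hr⟩

lemma seinsche_key {V : Type} [Fintype V] (G : SimpleGraph V) (v : V) (hP4 : P4Free G)
    (hG : G.Connected) (hGc : Gᶜ.Connected) (h3 : 3 ≤ Fintype.card V)
    (hdisc : ¬ (G.comap (Subtype.val : {x : V // x ≠ v} → V)).Connected) : False := by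
  classical
  set W := {x : V // x ≠ v}
  set G' : SimpleGraph W := G.comap (Subtype.val : W → V) with hG'
  have hWne : Nonempty W := by
    obtain ⟨x, hx⟩ := Fintype.exists_ne_of_one_lt_card (by omega) v
    exact ⟨⟨x, hx⟩⟩
  have hpre : ¬ G'.Preconnected := by
    intro hp
    haveI := hWne
    exact hdisc ⟨hp⟩
  rw [SimpleGraph.Preconnected] at hpre
  push_neg at hpre
  obtain ⟨a, b, hab⟩ := hpre
  have nbr : ∀ u : W, ∃ x : W, G.Adj x.val v ∧ G'.Reachable u x := by
    intro u
    obtain ⟨w⟩ := hG.preconnected u.val v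
    exact walk_to_v v w u.prop rfl
  by_cases hall : ∀ y : W, G.Adj v y.val
  · have : Gᶜ.Reachable v a.val := hGc.preconnected v a.val
    obtain ⟨x, hx⟩ := exists_adj_of_reachable_ne this (Ne.symm a.prop)
    exact hx.2 (hall ⟨x, fun h => hx.1 h.symm⟩)
  · push_neg at hall
    obtain ⟨y, hy⟩ := hall
    have hz : ∃ z : W, ¬ G'.Reachable y z := by
      by_contra hc
      push_neg at hc
      exact hab ((hc a).symm.trans (hc b))
    obtain ⟨z, hz⟩ := hz
    obtain ⟨z', hz'1, hz'2⟩ := nbr z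
    obtain ⟨w0, hw01, hw02⟩ := nbr y
    obtain ⟨pw⟩ := hw02
    obtain ⟨x0, x1, hx01, hx0, hx1, hreach⟩ :=
      walk_transition (fun x : W => G.Adj x.val v) pw (fun h => hy h.symm) hw01
    have hzny : ∀ t : W, G'.Reachable y t → ¬ G'.Reachable z t := by
      intro t h1 h2
      exact hz (h1.trans h2.symm)
    have hry1 : G'.Reachable y x1 := hreach.trans (SimpleGraph.Adj.reachable hx01)
    have hne1 : z'.val ≠ x1.val := by
      intro he
      exact hzny x1 hry1 ((Subtype.ext he : z' = x1) ▸ hz'2)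
    have hne0 : z'.val ≠ x0.val := by
      intro he
      exact hzny x0 hreach ((Subtype.ext he : z' = x0) ▸ hz'2)
    have hnadj1 : ¬ G.Adj z'.val x1.val := by
      intro hadj
      exact hzny x1 hry1 (hz'2.trans (SimpleGraph.Adj.reachable (by exact hadj : G'.Adj z' x1)))
    have hnadj0 : ¬ G.Adj z'.val x0.val := by
      intro hadj
      exact hzny x0 hreach (hz'2.trans (SimpleGraph.Adj.reachable (by exact hadj : G'.Adj z' x0)))
    exact hP4 z'.val v x1.val x0.val hne1 hne0 (Ne.symm x0.prop)
      hz'1 hx1.symm (by exact hx01.symm) hnadj1 hnadj0 (fun h => hx0 h.symm)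

lemma seinsche_aux : ∀ n : ℕ, ∀ (V : Type) [inst : Fintype V] (G : SimpleGraph V),
    Fintype.card V = n → P4Free G → 2 ≤ n → G.Connected → Gᶜ.Connected → False := by
  intro n
  induction n using Nat.strong_induction_on with
  | _ n IH =>
  intro V _ G hcard hP4 hn hG hGc
  classical
  rcases eq_or_lt_of_le hn with h2 | h3
  · obtain ⟨u, w, huw, huniv⟩ := (Nat.card_eq_two_iff (α := V)).mp
      (by rw [Nat.card_eq_fintype_card, hcard]; exact h2.symm)
    have hall : ∀ z : V, z = u ∨ z = w := by
      intro z
      have hz : z ∈ ({u, w} : Set V) := huniv ▸ Set.mem_univ z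
      simpa using hz
    have hadj : G.Adj u w := by
      obtain ⟨x, hx⟩ := exists_adj_of_reachable_ne (hG.preconnected u w) huw
      rcases hall x with rfl | rfl
      · exact absurd rfl hx.ne
      · exact hx
    have hadjc : Gᶜ.Adj u w := by
      obtain ⟨x, hx⟩ := exists_adj_of_reachable_ne (hGc.preconnected u w) huw
      rcases hall x with rfl | rfl
      · exact absurd rfl hx.ne
      · exact hx
    exact hadjc.2 hadj
  · have hne : Nonempty V := Fintype.card_pos_iff.mp (by omega)
    obtain ⟨v⟩ := hne
    set W := {x : V // x ≠ v} with hW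
    set G' : SimpleGraph W := G.comap Subtype.val with hG'
    have hcW : Fintype.card W = n - 1 := by
      have h1 : Fintype.card {x : V // ¬ (x = v)} =
          Fintype.card V - Fintype.card {x : V // x = v} := Fintype.card_subtype_compl _
      rw [Fintype.card_subtype_eq, hcard] at h1
      exact h1
    have hP4' : P4Free G' := by
      intro a b c d hac had hbd hab hbc hcd hnac hnad hnbd
      exact hP4 a.val b.val c.val d.val (Subtype.coe_ne_coe.mpr hac)
        (Subtype.coe_ne_coe.mpr had) (Subtype.coe_ne_coe.mpr hbd) hab hbc hcd hnac hnad hnbd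
    have hIH := IH (n-1) (by omega) W G' hcW hP4' (by omega)
    have hcompl : G'ᶜ = (Gᶜ).comap (Subtype.val : W → V) := by
      ext a b
      simp only [SimpleGraph.compl_adj, SimpleGraph.comap_adj, Subtype.coe_ne_coe]
      tauto
    by_cases hc1 : G'.Connected
    · have hdisc2 : ¬ ((Gᶜ).comap (Subtype.val : W → V)).Connected := by
        rw [← hcompl]
        exact fun h => hIH hc1 h
      exact seinsche_key Gᶜ v hP4.compl hGc (by rwa [compl_compl]) (by omega) hdisc2
    · exact seinsche_key G v hP4 hG hGc (by omega) hc1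

def invG {n : ℕ} (π : Perm (Fin n)) : SimpleGraph (Fin n) :=
  SimpleGraph.fromRel (fun i j => i < j ∧ π j < π i)

lemma invG_compl {n : ℕ} (π : Perm (Fin n)) :
    (invG π)ᶜ = invG (π.trans Fin.revPerm) := by
  ext i j
  have hinj : i.val = j.val ↔ (π i).val = (π j).val := by
    constructor
    · intro h; rw [show i = j from Fin.ext h]
    · intro h; rw [π.injective (Fin.ext h)]
  simp only [SimpleGraph.compl_adj, invG, SimpleGraph.fromRel_adj, Equiv.trans_apply,
    Fin.revPerm_apply, Fin.rev_lt_rev, ne_eq]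
  simp only [Fin.ext_iff, Fin.lt_def]
  omega

lemma exists_split {n : ℕ} (π : Perm (Fin n)) (hn : 2 ≤ n) (hd : ¬ (invG π).Connected) :
    ∃ k : ℕ, 0 < k ∧ k < n ∧ ∀ i j : Fin n, i.val < k → k ≤ j.val → π i < π j := by
  classical
  have npos : 0 < n := by omega
  haveI : Nonempty (Fin n) := ⟨⟨0, npos⟩⟩
  set z : Fin n := ⟨0, npos⟩ with hz0
  have hpre : ¬ (invG π).Preconnected := fun hp => hd ⟨hp⟩
  rw [SimpleGraph.Preconnected] at hpre; push_neg at hpre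
  obtain ⟨u, w, huw⟩ := hpre
  set B : Finset (Fin n) := Finset.univ.filter (fun x => ¬ (invG π).Reachable z x) with hB
  have hBne : B.Nonempty := by
    by_cases hu : (invG π).Reachable z u
    · refine ⟨w, ?_⟩
      simp only [hB, Finset.mem_filter, Finset.mem_univ, true_and]
      exact fun hw => huw (hu.symm.trans hw)
    · refine ⟨u, ?_⟩
      simp only [hB, Finset.mem_filter, Finset.mem_univ, true_and]
      exact hu
  set kf := B.min' hBne with hkf
  have hkfB : kf ∈ B := B.min'_mem hBne
  have hzB : z ∉ B := by
    simp only [hB, Finset.mem_filter, Finset.mem_univ, true_and, not_not]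
    exact SimpleGraph.Reachable.refl z
  have hk0 : 0 < kf.val := by
    by_contra h
    have hzv : z.val = 0 := rfl
    have : kf = z := Fin.ext (by omega)
    exact hzB (this ▸ hkfB)
  have cross1 : ∀ x y : Fin n, x ∉ B → y ∈ B → ¬ (invG π).Adj x y := by
    intro x y hx hy hadj
    simp only [hB, Finset.mem_filter, Finset.mem_univ, true_and, not_not] at hx hy
    exact hy (hx.trans hadj.reachable)
  have crossval1 : ∀ x y : Fin n, x ∉ B → y ∈ B → x < y → π x < π y := by
    intro x y hx hy hxy
    have hne : π y ≠ π x := fun h => hxy.ne (π.injective h.symm)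
    by_contra hle
    exact cross1 x y hx hy
      ((SimpleGraph.fromRel_adj _ x y).mpr ⟨hxy.ne, Or.inl ⟨hxy, lt_of_le_of_ne (not_lt.mp hle) hne⟩⟩)
  have crossval2 : ∀ x y : Fin n, x ∈ B → y ∉ B → x < y → π x < π y := by
    intro x y hx hy hxy
    have hne : π y ≠ π x := fun h => hxy.ne (π.injective h.symm)
    by_contra hle
    exact cross1 y x hy hx
      ((SimpleGraph.fromRel_adj _ y x).mpr ⟨hxy.ne.symm, Or.inr ⟨hxy, lt_of_le_of_ne (not_lt.mp hle) hne⟩⟩)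
  refine ⟨kf.val, hk0, kf.isLt, ?_⟩
  intro i j hi hj
  have hiB : i ∉ B := by
    intro h
    exact absurd (B.min'_le i h) (not_le.mpr (Fin.lt_def.mpr hi))
  rcases eq_or_lt_of_le hj with hjk | hjk
  · have : j = kf := Fin.ext hjk.symm
    rw [this]
    exact crossval1 i kf hiB hkfB (Fin.lt_def.mpr hi)
  · by_cases hjB : j ∈ B
    · exact crossval1 i j hiB hjB (Fin.lt_def.mpr (by omega))
    · exact (crossval1 i kf hiB hkfB (Fin.lt_def.mpr hi)).trans
        (crossval2 kf j hkfB hjB (Fin.lt_def.mpr (by omega)))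

lemma exists_occ {n k : ℕ} (π : Perm (Fin n)) (x : Fin k → Fin n) (hx : StrictMono x) :
    ∃ ρ : Perm (Fin k), occursAt ρ π x := by
  classical
  set y : Fin k → Fin n := fun i => π (x i) with hy
  have hyinj : Function.Injective y := fun i j h => hx.injective (π.injective h)
  set t : Finset (Fin n) := Finset.univ.image y with ht
  have htc : t.card = k := by
    rw [ht, Finset.card_image_of_injective _ hyinj, Finset.card_univ, Fintype.card_fin]
  set e := t.orderIsoOfFin htc with he
  have hmem : ∀ i, y i ∈ t := fun i => Finset.mem_image_of_mem y (Finset.mem_univ i)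
  set ρf : Fin k → Fin k := fun i => e.symm ⟨y i, hmem i⟩ with hρf
  have hρinj : Function.Injective ρf := by
    intro i j h
    apply hyinj
    exact Subtype.ext_iff.mp (e.symm.injective h)
  refine ⟨Equiv.ofBijective ρf (Finite.injective_iff_bijective.mp hρinj), hx, ?_⟩
  intro i j
  show ρf i < ρf j ↔ _
  rw [hρf]
  simp only [OrderIso.lt_iff_lt e.symm, Subtype.mk_lt_mk]
  exact Iff.rfl

lemma invG_P4Free {n : ℕ} (π : Perm (Fin n)) (h1 : ¬ Contains p2413 π)
    (h2 : ¬ Contains p3142 π) : P4Free (invG π) := by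
  classical
  intro a b c d hac had hbd hab hbc hcd hnac hnad hnbd
  have dab : a ≠ b := hab.ne
  have dbc : b ≠ c := hbc.ne
  have dcd : c ≠ d := hcd.ne
  have dba := dab.symm; have dcb := dbc.symm; have ddc := dcd.symm
  have dca := hac.symm; have dda := had.symm; have ddb := hbd.symm
  have hba := hab.symm; have hcb := hbc.symm; have hdc := hcd.symm
  have hnca : ¬ (invG π).Adj c a := fun h => hnac h.symm
  have hnda : ¬ (invG π).Adj d a := fun h => hnad h.symm
  have hndb : ¬ (invG π).Adj d b := fun h => hnbd h.symm
  set s : Finset (Fin n) := {a, b, c, d} with hs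
  have hcard : s.card = 4 := by
    rw [hs]
    rw [Finset.card_insert_of_notMem (by simp [dab, hac, had]),
      Finset.card_insert_of_notMem (by simp [dbc, hbd]),
      Finset.card_insert_of_notMem (by simp [dcd]), Finset.card_singleton]
  set e := s.orderIsoOfFin hcard with he
  set x : Fin 4 → Fin n := fun i => (e i).val with hx
  have hxmono : StrictMono x := fun i j hij => Subtype.coe_lt_coe.mpr (e.strictMono hij)
  obtain ⟨ρ, hocc⟩ := exists_occ π x hxmono
  set vm : Fin 4 → Fin n := ![a, b, c, d] with hvm
  have hv0 : vm 0 = a := rfl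
  have hv1 : vm 1 = b := rfl
  have hv2 : vm 2 = c := rfl
  have hv3 : vm 3 = d := rfl
  have hvmem : ∀ l, vm l ∈ s := by intro l; fin_cases l <;> simp [hv0, hv1, hv2, hv3, hs]
  set gf : Fin 4 → Fin 4 := fun l => e.symm ⟨vm l, hvmem l⟩ with hgf
  have hvminj : Function.Injective vm := by
    intro l m hlm
    fin_cases l <;> fin_cases m <;> simp_all [hv0, hv1, hv2, hv3]
  have hgfinj : Function.Injective gf := by
    intro l m h
    exact hvminj (Subtype.ext_iff.mp (e.symm.injective h))
  set g := Equiv.ofBijective gf (Finite.injective_iff_bijective.mp hgfinj) with hg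
  have hxg : ∀ l, x (gf l) = vm l := by
    intro l
    show (e (e.symm ⟨vm l, hvmem l⟩)).val = vm l
    rw [OrderIso.apply_symm_apply]
  have hAdjIff : ∀ l m : Fin 4, l ≠ m → ((invG π).Adj (vm l) (vm m) ↔
      (l.val + 1 = m.val ∨ m.val + 1 = l.val)) := by
    intro l m hlm
    fin_cases l <;> fin_cases m <;>
      simp_all [hv0, hv1, hv2, hv3, iff_true, iff_false]
  have hrel : ∀ i j : Fin 4, i < j → (ρ j < ρ i ↔
      ((g.symm i).val + 1 = (g.symm j).val ∨ (g.symm j).val + 1 = (g.symm i).val)) := by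
    intro i j hij
    have hxij : x i < x j := hxmono hij
    have hadj : (invG π).Adj (x i) (x j) ↔ π (x j) < π (x i) := by
      rw [invG, SimpleGraph.fromRel_adj]
      constructor
      · rintro ⟨-, ⟨-, h⟩ | ⟨h', -⟩⟩
        · exact h
        · exact absurd hxij (asymm h')
      · intro h
        exact ⟨hxij.ne, Or.inl ⟨hxij, h⟩⟩
    have hgsi : x i = vm (g.symm i) := by
      rw [← hxg (g.symm i)]
      congr 1
      exact (g.apply_symm_apply i).symm
    have hgsj : x j = vm (g.symm j) := by
      rw [← hxg (g.symm j)]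
      congr 1
      exact (g.apply_symm_apply j).symm
    have hne : g.symm i ≠ g.symm j := fun h => hij.ne (g.symm.injective h)
    rw [hocc.2 j i, ← hadj, hgsi, hgsj]
    exact hAdjIff _ _ hne
  rcases key_decide ρ ((g.symm : Fin 4 ≃ Fin 4)) hrel with rfl | rfl
  · exact h1 ⟨x, hocc⟩
  · exact h2 ⟨x, hocc⟩

lemma plus_decomp {k m : ℕ} (hk : 0 < k) (hm : 0 < m) (π : Perm (Fin (k+m)))
    (h : ∀ i j : Fin (k+m), i.val < k → k ≤ j.val → π i < π j) :
    ∃ (σ : Perm (Fin k)) (τ : Perm (Fin m)), π = directSum σ τ := by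
  classical
  have hkm : k < k + m := by omega
  have bound1 : ∀ i : Fin (k+m), i.val < k → (π i).val < k := by
    intro i hi
    by_contra hc
    push_neg at hc
    have hsub : (Finset.Ici (⟨k, hkm⟩ : Fin (k+m))).image π ⊆ Finset.Ioi (π i) := by
      intro v hv
      obtain ⟨j, hj, rfl⟩ := Finset.mem_image.mp hv
      exact Finset.mem_Ioi.mpr (h i j hi (Fin.le_def.mp (Finset.mem_Ici.mp hj)))
    have hc1 : ((Finset.Ici (⟨k, hkm⟩ : Fin (k+m))).image π).card = m := by
      rw [Finset.card_image_of_injective _ π.injective, Fin.card_Ici]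
      show k + m - k = m
      omega
    have hc2 := Finset.card_le_card hsub
    rw [hc1, Fin.card_Ioi] at hc2
    omega
  have bound2 : ∀ j : Fin (k+m), k ≤ j.val → k ≤ (π j).val := by
    intro j hj
    by_contra hc
    push_neg at hc
    have hsub : (Finset.Iio (⟨k, hkm⟩ : Fin (k+m))).image π ⊆ Finset.Iio (π j) := by
      intro v hv
      obtain ⟨i, hi, rfl⟩ := Finset.mem_image.mp hv
      exact Finset.mem_Iio.mpr (h i j (Fin.lt_def.mp (Finset.mem_Iio.mp hi)) hj)
    have hc1 : ((Finset.Iio (⟨k, hkm⟩ : Fin (k+m))).image π).card = k := by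
      rw [Finset.card_image_of_injective _ π.injective, Fin.card_Iio]
    have hc2 := Finset.card_le_card hsub
    rw [hc1, Fin.card_Iio] at hc2
    omega
  set σf : Fin k → Fin k := fun i => ⟨(π (Fin.castAdd m i)).val,
    bound1 _ (by simp)⟩ with hσf
  set τf : Fin m → Fin m := fun j => ⟨(π (Fin.natAdd k j)).val - k,
    by have h1 := (π (Fin.natAdd k j)).isLt; omega⟩ with hτf
  have hσinj : Function.Injective σf := by
    intro i1 i2 hi
    have hv := congrArg Fin.val hi
    simp only [hσf] at hv
    have h2 : Fin.castAdd m i1 = Fin.castAdd m i2 := π.injective (Fin.ext hv)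
    have h3 := congrArg Fin.val h2
    simp only [Fin.coe_castAdd] at h3
    exact Fin.ext h3
  have hτinj : Function.Injective τf := by
    intro j1 j2 hj
    have hb1 : k ≤ (π (Fin.natAdd k j1)).val := bound2 _ (by simp)
    have hb2 : k ≤ (π (Fin.natAdd k j2)).val := bound2 _ (by simp)
    have hv := congrArg Fin.val hj
    simp only [hτf] at hv
    have h2 : Fin.natAdd k j1 = Fin.natAdd k j2 := π.injective (Fin.ext (by omega))
    have h3 := congrArg Fin.val h2
    simp only [Fin.coe_natAdd] at h3
    exact Fin.ext (by omega)
  refine ⟨Equiv.ofBijective σf (Finite.injective_iff_bijective.mp hσinj),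
    Equiv.ofBijective τf (Finite.injective_iff_bijective.mp hτinj), ?_⟩
  apply Equiv.ext
  intro x
  refine Fin.addCases (fun i => ?_) (fun j => ?_) x
  · rw [directSum_castAdd]
    exact Fin.ext rfl
  · rw [directSum_natAdd]
    have hb : k ≤ (π (Fin.natAdd k j)).val := bound2 _ (by simp)
    refine Fin.ext ?_
    show (π (Fin.natAdd k j)).val = k + ((π (Fin.natAdd k j)).val - k)
    omega

lemma minus_decomp {k m : ℕ} (hk : 0 < k) (hm : 0 < m) (π : Perm (Fin (k+m)))
    (h : ∀ i j : Fin (k+m), i.val < k → k ≤ j.val → π j < π i) :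
    ∃ (σ : Perm (Fin k)) (τ : Perm (Fin m)), π = skewSum σ τ := by
  classical
  have hkm : k < k + m := by omega
  have bound1 : ∀ i : Fin (k+m), i.val < k → m ≤ (π i).val := by
    intro i hi
    by_contra hc
    push_neg at hc
    have hsub : (Finset.Ici (⟨k, hkm⟩ : Fin (k+m))).image π ⊆ Finset.Iio (π i) := by
      intro v hv
      obtain ⟨j, hj, rfl⟩ := Finset.mem_image.mp hv
      exact Finset.mem_Iio.mpr (h i j hi (Fin.le_def.mp (Finset.mem_Ici.mp hj)))
    have hc1 : ((Finset.Ici (⟨k, hkm⟩ : Fin (k+m))).image π).card = m := by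
      rw [Finset.card_image_of_injective _ π.injective, Fin.card_Ici]
      show k + m - k = m
      omega
    have hc2 := Finset.card_le_card hsub
    rw [hc1, Fin.card_Iio] at hc2
    omega
  have bound2 : ∀ j : Fin (k+m), k ≤ j.val → (π j).val < m := by
    intro j hj
    by_contra hc
    push_neg at hc
    have hsub : (Finset.Iio (⟨k, hkm⟩ : Fin (k+m))).image π ⊆ Finset.Ioi (π j) := by
      intro v hv
      obtain ⟨i, hi, rfl⟩ := Finset.mem_image.mp hv
      exact Finset.mem_Ioi.mpr (h i j (Fin.lt_def.mp (Finset.mem_Iio.mp hi)) hj)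
    have hc1 : ((Finset.Iio (⟨k, hkm⟩ : Fin (k+m))).image π).card = k := by
      rw [Finset.card_image_of_injective _ π.injective, Fin.card_Iio]
    have hc2 := Finset.card_le_card hsub
    rw [hc1, Fin.card_Ioi] at hc2
    omega
  set σf : Fin k → Fin k := fun i => ⟨(π (Fin.castAdd m i)).val - m,
    by have h1 := (π (Fin.castAdd m i)).isLt; omega⟩ with hσf
  set τf : Fin m → Fin m := fun j => ⟨(π (Fin.natAdd k j)).val,
    bound2 _ (by simp)⟩ with hτf
  have hσinj : Function.Injective σf := by
    intro i1 i2 hi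
    have hb1 : m ≤ (π (Fin.castAdd m i1)).val := bound1 _ (by simp)
    have hb2 : m ≤ (π (Fin.castAdd m i2)).val := bound1 _ (by simp)
    have hv := congrArg Fin.val hi
    simp only [hσf] at hv
    have h2 : Fin.castAdd m i1 = Fin.castAdd m i2 := π.injective (Fin.ext (by omega))
    have h3 := congrArg Fin.val h2
    simp only [Fin.coe_castAdd] at h3
    exact Fin.ext h3
  have hτinj : Function.Injective τf := by
    intro j1 j2 hj
    have hv := congrArg Fin.val hj
    simp only [hτf] at hv
    have h2 : Fin.natAdd k j1 = Fin.natAdd k j2 := π.injective (Fin.ext hv)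
    have h3 := congrArg Fin.val h2
    simp only [Fin.coe_natAdd] at h3
    exact Fin.ext (by omega)
  refine ⟨Equiv.ofBijective σf (Finite.injective_iff_bijective.mp hσinj),
    Equiv.ofBijective τf (Finite.injective_iff_bijective.mp hτinj), ?_⟩
  apply Equiv.ext
  intro x
  refine Fin.addCases (fun i => ?_) (fun j => ?_) x
  · refine Fin.ext ?_
    rw [skewSum_castAdd]
    have hb : m ≤ (π (Fin.castAdd m i)).val := bound1 _ (by simp)
    show (π (Fin.castAdd m i)).val = m + ((π (Fin.castAdd m i)).val - m)
    omega
  · refine Fin.ext ?_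
    rw [skewSum_natAdd]
    rfl


lemma sep_avoids {n : ℕ} {π : Perm (Fin n)} (h : IsSepPerm π) :
    ¬ Contains p2413 π ∧ ¬ Contains p3142 π := by
  induction h with
  | single =>
    constructor <;> rintro ⟨f, hf, -⟩ <;>
    · have h01 := hf (show (0 : Fin 4) < 1 by decide)
      have hb0 := (f 0).isLt
      have hb1 := (f 1).isLt
      rw [Fin.lt_def] at h01
      omega
  | dsum h1 h2 ih1 ih2 =>
    constructor
    · intro hc
      rcases contains_directSum_elim hp_2413 hc with h | h
      exacts [ih1.1 h, ih2.1 h]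
    · intro hc
      rcases contains_directSum_elim hp_3142 hc with h | h
      exacts [ih1.2 h, ih2.2 h]
  | ssum h1 h2 ih1 ih2 =>
    constructor
    · intro hc
      rcases contains_skewSum_elim hq_2413 hc with h | h
      exacts [ih1.1 h, ih2.1 h]
    · intro hc
      rcases contains_skewSum_elim hq_3142 hc with h | h
      exacts [ih1.2 h, ih2.2 h]

lemma avoids_sep : ∀ n : ℕ, 1 ≤ n → ∀ π : Perm (Fin n),
    ¬ Contains p2413 π → ¬ Contains p3142 π → IsSepPerm π := by
  intro n
  induction n using Nat.strong_induction_on with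
  | _ n IH =>
  intro hn π h1 h2
  rcases eq_or_lt_of_le hn with h | h
  · subst h
    have hπ : π = 1 := Subsingleton.elim π 1
    rw [hπ]
    exact IsSepPerm.single
  · have hP4 : P4Free (invG π) := invG_P4Free π h1 h2
    have hcard : Fintype.card (Fin n) = n := Fintype.card_fin n
    by_cases hc : (invG π).Connected
    · by_cases hcc : (invG π)ᶜ.Connected
      · exact (seinsche_aux n (Fin n) (invG π) hcard hP4 (by omega) hc hcc).elim
      · have hd : ¬ (invG (π.trans Fin.revPerm)).Connected := by
          rw [← invG_compl]; exact hcc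
        obtain ⟨k, hk0, hkn, hsplit⟩ := exists_split (π.trans Fin.revPerm) (by omega) hd
        have hQ : ∀ i j : Fin n, i.val < k → k ≤ j.val → π j < π i := by
          intro i j hi hj
          have hr : (π i).rev < (π j).rev := hsplit i j hi hj
          exact Fin.rev_lt_rev.mp hr
        obtain ⟨m, rfl⟩ : ∃ m, n = k + m := ⟨n - k, by omega⟩
        obtain ⟨σ, τ, rfl⟩ := minus_decomp (by omega) (by omega) π hQ
        exact IsSepPerm.ssum
          (IH k (by omega) (by omega) σ (fun hcon => h1 (contains_skewSum_left hcon))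
            (fun hcon => h2 (contains_skewSum_left hcon)))
          (IH m (by omega) (by omega) τ (fun hcon => h1 (contains_skewSum_right hcon))
            (fun hcon => h2 (contains_skewSum_right hcon)))
    · obtain ⟨k, hk0, hkn, hsplit⟩ := exists_split π (by omega) hc
      obtain ⟨m, rfl⟩ : ∃ m, n = k + m := ⟨n - k, by omega⟩
      obtain ⟨σ, τ, rfl⟩ := plus_decomp (by omega) (by omega) π hsplit
      exact IsSepPerm.dsum
        (IH k (by omega) (by omega) σ (fun hcon => h1 (contains_directSum_left hcon))
          (fun hcon => h2 (contains_directSum_left hcon)))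
        (IH m (by omega) (by omega) τ (fun hcon => h1 (contains_directSum_right hcon))
          (fun hcon => h2 (contains_directSum_right hcon)))

/-- A (nonempty) permutation is separable iff it avoids both 2413 and 3142. -/
theorem separable_iff_avoids (n : ℕ) (hn : 1 ≤ n) (π : Perm (Fin n)) :
    IsSepPerm π ↔ (¬ Contains p2413 π ∧ ¬ Contains p3142 π) := by
  constructor
  · exact fun h => sep_avoids h
  · rintro ⟨h1, h2⟩
    exact avoids_sep n hn π h1 h2
end

section
/- The number of separable permutations of length n equals the n-th large Schröder number; equivalently, the generating function S(t) = Σ_{n≥0} s_n t^n (with s_0 = 1) satisfies S = (3 − t − √(1 − 6t + t²))/2. -/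
open Equiv

/-- The number of separable permutations of length `n`. -/
noncomputable def sepCount (n : ℕ) : ℕ := Nat.card {π : Perm (Fin n) // IsSepPerm π}

/-- The generating function `S(t) = Σ_{n ≥ 0} s_n tⁿ` of the separable permutations,
with the convention `s_0 = 1`. -/
noncomputable def Sgf : PowerSeries ℚ :=
  PowerSeries.mk fun n => if n = 0 then 1 else (sepCount n : ℚ)

namespace SepAux

variable {m n : ℕ}

lemma directSum_apply (σ : Perm (Fin m)) (τ : Perm (Fin n)) (i : Fin (m+n)) :
    ((directSum σ τ) i : ℕ) =
      if h : (i:ℕ) < m then (σ ⟨i, h⟩ : ℕ) else m + (τ ⟨(i:ℕ) - m, by omega⟩ : ℕ) := by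
  by_cases h : (i:ℕ) < m
  · have hi : i = Fin.castAdd n ⟨i, h⟩ := by ext; simp
    rw [hi]
    simp only [directSum, Equiv.trans_apply, finSumFinEquiv_symm_apply_castAdd,
      sumCongr_apply, Sum.map_inl, finSumFinEquiv_apply_left]
    simp [h]
  · have hi : i = Fin.natAdd m ⟨(i:ℕ) - m, by omega⟩ := by ext; simp; omega
    rw [hi]
    simp only [directSum, Equiv.trans_apply, finSumFinEquiv_symm_apply_natAdd,
      sumCongr_apply, Sum.map_inr, finSumFinEquiv_apply_right]
    simp [h]

lemma directSum_apply_lt (σ : Perm (Fin m)) (τ : Perm (Fin n)) (i : Fin (m+n))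
    (h : (i:ℕ) < m) : ((directSum σ τ) i : ℕ) = (σ ⟨i, h⟩ : ℕ) := by
  rw [directSum_apply, dif_pos h]

lemma directSum_apply_ge (σ : Perm (Fin m)) (τ : Perm (Fin n)) (i : Fin (m+n))
    (h : ¬ (i:ℕ) < m) :
    ((directSum σ τ) i : ℕ) = m + (τ ⟨(i:ℕ) - m, by omega⟩ : ℕ) := by
  rw [directSum_apply, dif_neg h]

lemma skewSum_apply (σ : Perm (Fin m)) (τ : Perm (Fin n)) (i : Fin (m+n)) :
    ((skewSum σ τ) i : ℕ) =
      if h : (i:ℕ) < m then n + (σ ⟨i, h⟩ : ℕ) else (τ ⟨(i:ℕ) - m, by omega⟩ : ℕ) := by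
  by_cases h : (i:ℕ) < m
  · have hi : i = Fin.castAdd n ⟨i, h⟩ := by ext; simp
    rw [hi]
    simp only [skewSum, Equiv.trans_apply, finSumFinEquiv_symm_apply_castAdd,
      sumCongr_apply, Sum.map_inl, sumComm_apply, Sum.swap_inl, finSumFinEquiv_apply_right]
    simp [h]; omega
  · have hi : i = Fin.natAdd m ⟨(i:ℕ) - m, by omega⟩ := by ext; simp; omega
    rw [hi]
    simp only [skewSum, Equiv.trans_apply, finSumFinEquiv_symm_apply_natAdd,
      sumCongr_apply, Sum.map_inr, sumComm_apply, Sum.swap_inr, finSumFinEquiv_apply_left]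
    simp [h]


/-- `k` is a "plus breakpoint": indices below `k` map below `k`. -/
def brk (π : Perm (Fin n)) (k : ℕ) : Prop := ∀ i : Fin n, (i:ℕ) < k → ((π i : ℕ) < k)

/-- `k` is a "minus breakpoint": indices below `k` map to `[n-k, n)`. -/
def mbrk (π : Perm (Fin n)) (k : ℕ) : Prop := ∀ i : Fin n, (i:ℕ) < k → (n - k ≤ (π i : ℕ))

def PDec (π : Perm (Fin n)) : Prop := ∃ k, 0 < k ∧ k < n ∧ brk π k

def MDec (π : Perm (Fin n)) : Prop := ∃ k, 0 < k ∧ k < n ∧ mbrk π k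

lemma brk_compl {π : Perm (Fin n)} {k : ℕ} (h : brk π k) :
    ∀ i : Fin n, k ≤ (i:ℕ) → k ≤ (π i : ℕ) := by
  classical
  intro i hi
  by_contra hlt
  push_neg at hlt
  set S : Finset (Fin n) := Finset.univ.filter (fun j : Fin n => (j:ℕ) < k) with hS
  have himg : S.image π = S := by
    apply Finset.eq_of_subset_of_card_le
    · intro x hx
      simp only [hS, Finset.mem_image, Finset.mem_filter, Finset.mem_univ, true_and] at hx ⊢
      obtain ⟨j, hj, rfl⟩ := hx
      exact h j hj
    · rw [Finset.card_image_of_injective _ π.injective]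
  have : π i ∈ S := by rw [hS]; simp [hlt]
  rw [← himg] at this
  simp only [Finset.mem_image] at this
  obtain ⟨j, hj, hji⟩ := this
  have : j = i := π.injective hji
  subst this
  rw [hS] at hj; simp at hj; omega

lemma brk_inv {π : Perm (Fin n)} {k : ℕ} (h : brk π k) : brk π⁻¹ k := by
  intro i hi
  by_contra hge
  push_neg at hge
  have := brk_compl h (π⁻¹ i) hge
  rw [Perm.inv_def, Equiv.apply_symm_apply] at this
  omega

lemma card_filter_val {P : ℕ → Prop} [DecidablePred P] :
    (Finset.univ.filter (fun j : Fin n => P (j:ℕ))).card = ((Finset.range n).filter P).card := by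
  rw [Finset.card_filter, Finset.card_filter]
  exact Fin.sum_univ_eq_sum_range (fun j => if P j then 1 else 0) n

lemma mbrk_compl {π : Perm (Fin n)} {k : ℕ} (hk : k ≤ n) (h : mbrk π k) :
    ∀ i : Fin n, k ≤ (i:ℕ) → (π i : ℕ) < n - k := by
  classical
  intro i hi
  by_contra hlt
  push_neg at hlt
  set S : Finset (Fin n) := Finset.univ.filter (fun j : Fin n => (j:ℕ) < k) with hS
  set T : Finset (Fin n) := Finset.univ.filter (fun j : Fin n => n - k ≤ (j:ℕ)) with hT
  have hScard : S.card = k := by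
    rw [hS, card_filter_val (P := fun j => j < k)]
    have : (Finset.range n).filter (fun j => j < k) = Finset.range k := by
      ext j; simp; omega
    rw [this, Finset.card_range]
  have hTcard : T.card = k := by
    rw [hT, card_filter_val (P := fun j => n - k ≤ j)]
    have : (Finset.range n).filter (fun j => n - k ≤ j) = Finset.Ico (n-k) n := by
      ext j; simp [Finset.mem_Ico]; omega
    rw [this, Nat.card_Ico]; omega
  have himg : S.image π = T := by
    apply Finset.eq_of_subset_of_card_le
    · intro x hx
      simp only [hS, hT, Finset.mem_image, Finset.mem_filter, Finset.mem_univ, true_and] at hx ⊢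
      obtain ⟨j, hj, rfl⟩ := hx
      exact h j hj
    · rw [Finset.card_image_of_injective _ π.injective, hScard, hTcard]
  have : π i ∈ T := by rw [hT]; simp only [Finset.mem_filter, Finset.mem_univ, true_and]; exact hlt
  rw [← himg] at this
  simp only [Finset.mem_image] at this
  obtain ⟨j, hj, hji⟩ := this
  have : j = i := π.injective hji
  subst this
  rw [hS] at hj; simp at hj; omega

/-- The lower cut of a permutation at a breakpoint. -/
def cutL (π : Perm (Fin n)) (b : ℕ) (hb : brk π b) (hbn : b ≤ n) : Perm (Fin b) where
  toFun i := ⟨π ⟨i, lt_of_lt_of_le i.2 hbn⟩, hb _ i.2⟩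
  invFun i := ⟨π⁻¹ ⟨i, lt_of_lt_of_le i.2 hbn⟩, brk_inv hb _ i.2⟩
  left_inv := by
    intro i; ext; simp only [Fin.eta, Perm.inv_def, Equiv.symm_apply_apply]
  right_inv := by
    intro i; ext; simp only [Fin.eta, Perm.inv_def, Equiv.apply_symm_apply]

/-- The upper cut of a permutation at a breakpoint. -/
def cutH (π : Perm (Fin n)) (b : ℕ) (hb : brk π b) : Perm (Fin (n - b)) where
  toFun i := ⟨(π ⟨b + i, by omega⟩ : ℕ) - b, by
    have h1 := brk_compl hb ⟨b + i, by omega⟩ (by simp)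
    have h2 := (π ⟨b + i, by omega⟩).2
    omega⟩
  invFun i := ⟨(π⁻¹ ⟨b + i, by omega⟩ : ℕ) - b, by
    have h1 := brk_compl (brk_inv hb) ⟨b + i, by omega⟩ (by simp)
    have h2 := (π⁻¹ ⟨b + i, by omega⟩).2
    omega⟩
  left_inv := by
    intro i
    ext
    simp only
    have h1 := brk_compl hb ⟨b + i, by omega⟩ (by simp)
    have e : (⟨b + ((π ⟨b + i, by omega⟩ : ℕ) - b), by omega⟩ : Fin n) = π ⟨b + i, by omega⟩ := by
      ext; simp; omega
    rw [e, Perm.inv_def, Equiv.symm_apply_apply]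
    simp
  right_inv := by
    intro i
    ext
    simp only
    have h1 := brk_compl (brk_inv hb) ⟨b + i, by omega⟩ (by simp)
    have e : (⟨b + ((π⁻¹ ⟨b + i, by omega⟩ : ℕ) - b), by omega⟩ : Fin n) = π⁻¹ ⟨b + i, by omega⟩ := by
      ext; simp only [Fin.val_mk]; omega
    rw [e, Perm.inv_def, Equiv.apply_symm_apply]
    simp

@[simp] lemma cutL_apply (π : Perm (Fin n)) (b : ℕ) (hb : brk π b) (hbn : b ≤ n) (i : Fin b) :
    (cutL π b hb hbn i : ℕ) = π ⟨i, lt_of_lt_of_le i.2 hbn⟩ := rfl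

@[simp] lemma cutH_apply (π : Perm (Fin n)) (b : ℕ) (hb : brk π b) (i : Fin (n - b)) :
    (cutH π b hb i : ℕ) = (π ⟨b + i, by omega⟩ : ℕ) - b := rfl

/-- Reconstruction: a permutation with a breakpoint is a direct sum of its cuts. -/
lemma cut_recon (π : Perm (Fin n)) (b : ℕ) (hb : brk π b) (hbn : b ≤ n) :
    π = (finCongr (Nat.add_sub_cancel' hbn)).permCongr (directSum (cutL π b hb hbn) (cutH π b hb)) := by
  ext i
  rw [Equiv.permCongr_apply]
  simp only [finCongr_symm, finCongr_apply]
  rw [Fin.coe_cast, directSum_apply]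
  by_cases h : (i : ℕ) < b
  · simp only [Fin.coe_cast, h, dif_pos]
    rw [cutL_apply]
  · simp only [Fin.coe_cast, h, dif_neg, not_false_iff]
    rw [cutH_apply]
    have h1 := brk_compl hb ⟨b + ((i:ℕ) - b), by omega⟩ (by simp)
    have e : (⟨b + ((i:ℕ) - b), by omega⟩ : Fin n) = i := by ext; simp; omega
    rw [e] at h1 ⊢
    omega

lemma skewSum_apply_lt (σ : Perm (Fin m)) (τ : Perm (Fin n)) (i : Fin (m+n))
    (h : (i:ℕ) < m) : ((skewSum σ τ) i : ℕ) = n + (σ ⟨i, h⟩ : ℕ) := by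
  rw [skewSum_apply, dif_pos h]

lemma skewSum_apply_ge (σ : Perm (Fin m)) (τ : Perm (Fin n)) (i : Fin (m+n))
    (h : ¬ (i:ℕ) < m) :
    ((skewSum σ τ) i : ℕ) = (τ ⟨(i:ℕ) - m, by omega⟩ : ℕ) := by
  rw [skewSum_apply, dif_neg h]

lemma brk_cast {m n : ℕ} (h : m = n) (π : Perm (Fin m)) (k : ℕ) :
    brk ((finCongr h).permCongr π) k ↔ brk π k := by
  subst h
  constructor <;> intro hbrk i hi
  · have := hbrk i hi
    simpa [Equiv.permCongr_apply] using this
  · simpa [Equiv.permCongr_apply] using hbrk i hi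

lemma mbrk_cast {m n : ℕ} (h : m = n) (π : Perm (Fin m)) (k : ℕ) :
    mbrk ((finCongr h).permCongr π) k ↔ mbrk π k := by
  subst h
  constructor <;> intro hbrk i hi
  · have := hbrk i hi
    simpa [Equiv.permCongr_apply, mbrk] using this
  · simpa [Equiv.permCongr_apply] using hbrk i hi

lemma PDec_cast {m n : ℕ} (h : m = n) (π : Perm (Fin m)) :
    PDec ((finCongr h).permCongr π) ↔ PDec π := by
  subst h
  unfold PDec
  simp_rw [brk_cast rfl]

lemma brk_directSum_left {σ : Perm (Fin m)} {τ : Perm (Fin n)} {j : ℕ} (hj : j ≤ m) :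
    brk (directSum σ τ) j ↔ brk σ j := by
  constructor
  · intro h i hi
    have := h ⟨i, by omega⟩ hi
    rw [directSum_apply_lt _ _ _ (show ((⟨(i:ℕ), by omega⟩ : Fin (m+n)) : ℕ) < m by
      simpa using lt_of_lt_of_le i.2 le_rfl)] at this
    simpa using this
  · intro h i hi
    have him : (i:ℕ) < m := by omega
    rw [directSum_apply_lt _ _ _ him]
    exact h _ hi

lemma brk_directSum_right {σ : Perm (Fin m)} {τ : Perm (Fin n)} {j : ℕ} (hj : m ≤ j) :
    brk (directSum σ τ) j ↔ brk τ (j - m) := by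
  constructor
  · intro h i hi
    have := h ⟨m + i, by omega⟩ (by simp; omega)
    rw [directSum_apply_ge _ _ _ (show ¬ ((⟨m + (i:ℕ), by omega⟩ : Fin (m+n)) : ℕ) < m by
      simp)] at this
    have e : (⟨((⟨m + (i:ℕ), by omega⟩ : Fin (m+n)) : ℕ) - m, by simp⟩ : Fin n) = i := by
      ext; simp
    rw [e] at this
    omega
  · intro h i hi
    by_cases him : (i:ℕ) < m
    · rw [directSum_apply_lt _ _ _ him]
      have := (σ ⟨i, him⟩).2
      omega
    · rw [directSum_apply_ge _ _ _ him]
      have := h ⟨(i:ℕ) - m, by omega⟩ (by simp; omega)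
      omega

lemma brk_directSum (σ : Perm (Fin m)) (τ : Perm (Fin n)) : brk (directSum σ τ) m :=
  (brk_directSum_left le_rfl).2 (fun i _ => (σ i).2)

lemma mbrk_skewSum (σ : Perm (Fin m)) (τ : Perm (Fin n)) : mbrk (skewSum σ τ) m := by
  intro i hi
  rw [skewSum_apply]
  simp only [hi, dif_pos]
  omega

lemma not_brk_skewSum {σ : Perm (Fin m)} {τ : Perm (Fin n)} (hm : 0 < m) (hn : 0 < n)
    {k : ℕ} (hk0 : 0 < k) (hkn : k < m + n) : ¬ brk (skewSum σ τ) k := by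
  intro h
  have h0 : ((skewSum σ τ) ⟨0, by omega⟩ : ℕ) < k := h _ hk0
  rw [skewSum_apply_lt _ _ _ (show ((⟨0, by omega⟩ : Fin (m+n)) : ℕ) < m from hm)] at h0
  have hkgtn : n < k := by omega
  have hlast := brk_compl h ⟨m + n - 1, by omega⟩ (by simp; omega)
  rw [skewSum_apply_ge _ _ _ (show ¬ ((⟨m + n - 1, by omega⟩ : Fin (m+n)) : ℕ) < m from by
    simp; omega)] at hlast
  have := (τ ⟨((⟨m + n - 1, by omega⟩ : Fin (m+n)) : ℕ) - m, by simp; omega⟩).2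
  omega

lemma not_mbrk_directSum {σ : Perm (Fin m)} {τ : Perm (Fin n)} (hm : 0 < m) (hn : 0 < n)
    {k : ℕ} (hk0 : 0 < k) (hkn : k < m + n) : ¬ mbrk (directSum σ τ) k := by
  intro h
  have h0 : m + n - k ≤ ((directSum σ τ) ⟨0, by omega⟩ : ℕ) := h _ hk0
  rw [directSum_apply_lt _ _ _ (show ((⟨0, by omega⟩ : Fin (m+n)) : ℕ) < m from hm)] at h0
  have hσ := (σ ⟨((⟨0, by omega⟩ : Fin (m+n)) : ℕ), hm⟩).2
  have hkgtn : n < k := by omega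
  have hlast := mbrk_compl (by omega) h ⟨m + n - 1, by omega⟩ (by simp; omega)
  rw [directSum_apply_ge _ _ _ (show ¬ ((⟨m + n - 1, by omega⟩ : Fin (m+n)) : ℕ) < m from by
    simp; omega)] at hlast
  omega

lemma not_PDec_and_MDec (π : Perm (Fin n)) : ¬ (PDec π ∧ MDec π) := by
  rintro ⟨⟨k, hk0, hkn, hb⟩, ⟨l, hl0, hln, hmb⟩⟩
  have h0b : ((π ⟨0, by omega⟩ : Fin n) : ℕ) < k := hb _ hk0
  have h0m : n - l ≤ ((π ⟨0, by omega⟩ : Fin n) : ℕ) := hmb _ hl0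
  have hlb : k ≤ ((π ⟨n - 1, by omega⟩ : Fin n) : ℕ) := brk_compl hb _ (by simp; omega)
  have hlm : ((π ⟨n - 1, by omega⟩ : Fin n) : ℕ) < n - l :=
    mbrk_compl (by omega) hmb _ (by simp; omega)
  omega

lemma sep_pos {k : ℕ} {π : Perm (Fin k)} (h : IsSepPerm π) : 0 < k := by
  induction h with
  | single => omega
  | dsum h1 h2 ih1 ih2 => omega
  | ssum h1 h2 ih1 ih2 => omega

lemma permCongr_finCongr_rfl {m : ℕ} (π : Perm (Fin m)) :
    (finCongr (rfl : m = m)).permCongr π = π := by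
  ext i
  simp [Equiv.permCongr_apply]

lemma isSep_cast {m n : ℕ} (h : m = n) {π : Perm (Fin m)} (hπ : IsSepPerm π) :
    IsSepPerm ((finCongr h).permCongr π) := by
  subst h
  rwa [permCongr_finCongr_rfl]

lemma appc {k : ℕ} (σ : Perm (Fin k)) (x y : Fin k) (h : (x:ℕ) = (y:ℕ)) :
    (σ x : ℕ) = (σ y : ℕ) :=
  congrArg (fun z : Fin k => ((σ z : Fin k) : ℕ)) (Fin.ext h)


set_option maxHeartbeats 3000000

lemma permCongr_val {m n : ℕ} (h : m = n) (Q : Perm (Fin m)) (i : Fin n) :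
    (((finCongr h).permCongr Q) i : ℕ) = (Q ⟨(i:ℕ), by omega⟩ : ℕ) := by
  subst h
  rw [permCongr_finCongr_rfl]

lemma cutL_directSum_low {σ : Perm (Fin m)} {τ : Perm (Fin n)} {b : ℕ} (hbm : b ≤ m)
    (h1 : brk (directSum σ τ) b) (h2 : brk σ b) (hbn : b ≤ m + n) :
    cutL (directSum σ τ) b h1 hbn = cutL σ b h2 hbm := by
  apply Equiv.ext; intro i; apply Fin.ext
  simp only [cutL_apply]
  rw [directSum_apply_lt _ _ _ (show ((⟨(i:ℕ), by omega⟩ : Fin (m+n)) : ℕ) < m by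
    simpa using lt_of_lt_of_le i.2 hbm)]

lemma cutH_directSum_low {σ : Perm (Fin m)} {τ : Perm (Fin n)} {b : ℕ} (hbm : b ≤ m)
    (h1 : brk (directSum σ τ) b) (h2 : brk σ b) :
    cutH (directSum σ τ) b h1 =
      (finCongr (show (m - b) + n = (m + n) - b by omega)).permCongr
        (directSum (cutH σ b h2) τ) := by
  apply Equiv.ext; intro i; apply Fin.ext
  rw [cutH_apply, permCongr_val, directSum_apply, directSum_apply]
  by_cases hi : (i : ℕ) < m - b
  · rw [dif_pos (show ((⟨(i:ℕ), by omega⟩ : Fin ((m-b)+n)) : ℕ) < m - b from hi),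
      dif_pos (show ((⟨b + (i:ℕ), by omega⟩ : Fin (m+n)) : ℕ) < m from
        (by omega : b + (i:ℕ) < m))]
    rw [cutH_apply]
  · rw [dif_neg (show ¬ ((⟨(i:ℕ), by omega⟩ : Fin ((m-b)+n)) : ℕ) < m - b from hi),
      dif_neg (show ¬ ((⟨b + (i:ℕ), by omega⟩ : Fin (m+n)) : ℕ) < m from
        (by omega : ¬ (b + (i:ℕ) < m)))]
    show m + (τ ⟨b + (i:ℕ) - m, by have := i.2; omega⟩ : ℕ) - b
        = (m - b) + (τ ⟨(i:ℕ) - (m - b), by have := i.2; omega⟩ : ℕ)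
    rw [appc τ ⟨b + (i:ℕ) - m, by have := i.2; omega⟩ ⟨(i:ℕ) - (m - b), by have := i.2; omega⟩
      (by omega : b + (i:ℕ) - m = (i:ℕ) - (m - b))]
    have := (τ ⟨(i:ℕ) - (m - b), by have := i.2; omega⟩).2
    omega

lemma cutL_directSum_self {σ : Perm (Fin m)} {τ : Perm (Fin n)}
    (h1 : brk (directSum σ τ) m) (hbn : m ≤ m + n) :
    cutL (directSum σ τ) m h1 hbn = σ := by
  apply Equiv.ext; intro i; apply Fin.ext
  simp only [cutL_apply]
  rw [directSum_apply_lt _ _ _ (show ((⟨(i:ℕ), by omega⟩ : Fin (m+n)) : ℕ) < m by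
    simpa using i.2)]

lemma cutH_directSum_self {σ : Perm (Fin m)} {τ : Perm (Fin n)}
    (h1 : brk (directSum σ τ) m) :
    cutH (directSum σ τ) m h1 =
      (finCongr (show n = (m + n) - m by omega)).permCongr τ := by
  apply Equiv.ext; intro i; apply Fin.ext
  rw [cutH_apply, permCongr_val, directSum_apply]
  rw [dif_neg (show ¬ ((⟨m + (i:ℕ), by omega⟩ : Fin (m+n)) : ℕ) < m from
    (by omega : ¬ (m + (i:ℕ) < m)))]
  show m + (τ ⟨m + (i:ℕ) - m, by have := i.2; omega⟩ : ℕ) - m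
      = (τ ⟨(i:ℕ), by have := i.2; omega⟩ : ℕ)
  rw [appc τ ⟨m + (i:ℕ) - m, by have := i.2; omega⟩ ⟨(i:ℕ), by have := i.2; omega⟩
    (by omega : m + (i:ℕ) - m = (i:ℕ))]
  omega

lemma cutL_directSum_high {σ : Perm (Fin m)} {τ : Perm (Fin n)} {b : ℕ} (hmb : m ≤ b)
    (hbmn : b ≤ m + n) (h1 : brk (directSum σ τ) b) (h2 : brk τ (b - m)) :
    cutL (directSum σ τ) b h1 hbmn =
      (finCongr (show m + (b - m) = b by omega)).permCongr
        (directSum σ (cutL τ (b - m) h2 (by omega))) := by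
  apply Equiv.ext; intro i; apply Fin.ext
  rw [cutL_apply, permCongr_val, directSum_apply, directSum_apply]
  by_cases hi : (i : ℕ) < m
  · rw [dif_pos (show ((⟨(i:ℕ), by omega⟩ : Fin (m+(b-m))) : ℕ) < m from hi),
      dif_pos (show ((⟨(i:ℕ), by omega⟩ : Fin (m+n)) : ℕ) < m from hi)]
  · rw [dif_neg (show ¬ ((⟨(i:ℕ), by omega⟩ : Fin (m+(b-m))) : ℕ) < m from hi),
      dif_neg (show ¬ ((⟨(i:ℕ), by omega⟩ : Fin (m+n)) : ℕ) < m from hi)]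
    show m + (τ ⟨(i:ℕ) - m, by have := i.2; omega⟩ : ℕ)
        = m + ((cutL τ (b - m) h2 (by omega)) ⟨(i:ℕ) - m, by have := i.2; omega⟩ : ℕ)
    rw [cutL_apply]

lemma cutH_directSum_high {σ : Perm (Fin m)} {τ : Perm (Fin n)} {b : ℕ} (hmb : m ≤ b)
    (hbmn : b ≤ m + n) (h1 : brk (directSum σ τ) b) (h2 : brk τ (b - m)) :
    cutH (directSum σ τ) b h1 =
      (finCongr (show n - (b - m) = (m + n) - b by omega)).permCongr (cutH τ (b - m) h2) := by
  apply Equiv.ext; intro i; apply Fin.ext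
  rw [cutH_apply, permCongr_val, cutH_apply, directSum_apply]
  rw [dif_neg (show ¬ ((⟨b + (i:ℕ), by omega⟩ : Fin (m+n)) : ℕ) < m from
    (by omega : ¬ (b + (i:ℕ) < m)))]
  show m + (τ ⟨b + (i:ℕ) - m, by have := i.2; omega⟩ : ℕ) - b
      = (τ ⟨(b - m) + (i:ℕ), by have := i.2; omega⟩ : ℕ) - (b - m)
  rw [appc τ ⟨b + (i:ℕ) - m, by have := i.2; omega⟩ ⟨(b - m) + (i:ℕ), by have := i.2; omega⟩
    (by omega : b + (i:ℕ) - m = (b - m) + (i:ℕ))]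
  have := (τ ⟨(b - m) + (i:ℕ), by have := i.2; omega⟩).2
  omega


lemma cut_sep {N : ℕ} {π : Perm (Fin N)} (hsep : IsSepPerm π) :
    ∀ (b : ℕ) (h0 : 0 < b) (hbN : b < N) (hb : brk π b),
      IsSepPerm (cutL π b hb (le_of_lt hbN)) ∧ IsSepPerm (cutH π b hb) := by
  induction hsep with
  | single => intro b h0 hbN hb; omega
  | @dsum m n σ τ hσ hτ ihσ ihτ =>
    intro b h0 hbN hb
    rcases lt_trichotomy b m with hbm | rfl | hmb
    · have h2 : brk σ b := (brk_directSum_left (le_of_lt hbm)).1 hb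
      constructor
      · rw [cutL_directSum_low (le_of_lt hbm) hb h2 (le_of_lt hbN)]
        exact (ihσ b h0 hbm h2).1
      · rw [cutH_directSum_low (le_of_lt hbm) hb h2]
        exact isSep_cast _ (IsSepPerm.dsum (ihσ b h0 hbm h2).2 hτ)
    · constructor
      · rw [cutL_directSum_self hb (le_of_lt hbN)]
        exact hσ
      · rw [cutH_directSum_self hb]
        exact isSep_cast _ hτ
    · have h2 : brk τ (b - m) := (brk_directSum_right (le_of_lt hmb)).1 hb
      constructor
      · rw [cutL_directSum_high (le_of_lt hmb) (le_of_lt hbN) hb h2]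
        exact isSep_cast _ (IsSepPerm.dsum hσ (ihτ (b - m) (by omega) (by omega) h2).1)
      · rw [cutH_directSum_high (le_of_lt hmb) (le_of_lt hbN) hb h2]
        exact isSep_cast _ (ihτ (b - m) (by omega) (by omega) h2).2
  | @ssum m n σ τ hσ hτ _ _ =>
    intro b h0 hbN hb
    exact absurd hb (not_brk_skewSum (sep_pos hσ) (sep_pos hτ) h0 hbN)

lemma sep_PDec_or_MDec {N : ℕ} {π : Perm (Fin N)} (h : IsSepPerm π) (hN : 2 ≤ N) :
    PDec π ∨ MDec π := by
  cases h with
  | single => omega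
  | @dsum m n σ τ hσ hτ =>
    left
    exact ⟨m, sep_pos hσ, by have := sep_pos hτ; omega, brk_directSum σ τ⟩
  | @ssum m n σ τ hσ hτ =>
    right
    exact ⟨m, sep_pos hσ, by have := sep_pos hτ; omega, mbrk_skewSum σ τ⟩

/-- complement: compose with the order-reversal of values. -/
def compl {N : ℕ} (π : Perm (Fin N)) : Perm (Fin N) := π.trans (Equiv.mk Fin.rev Fin.rev Fin.rev_rev Fin.rev_rev)

@[simp] lemma compl_val {N : ℕ} (π : Perm (Fin N)) (i : Fin N) :
    ((compl π) i : ℕ) = N - 1 - (π i : ℕ) := by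
  simp [compl, Equiv.trans_apply, Fin.rev]
  omega

lemma compl_compl {N : ℕ} (π : Perm (Fin N)) : compl (compl π) = π := by
  apply Equiv.ext; intro i; apply Fin.ext
  have h := (π i).2
  simp only [compl_val]
  omega

lemma compl_directSum {m n : ℕ} (σ : Perm (Fin m)) (τ : Perm (Fin n)) :
    compl (directSum σ τ) = skewSum (compl σ) (compl τ) := by
  apply Equiv.ext; intro i; apply Fin.ext
  rw [compl_val, directSum_apply, skewSum_apply]
  by_cases hi : (i:ℕ) < m
  · rw [dif_pos hi, dif_pos hi, compl_val]
    have := (σ ⟨(i:ℕ), hi⟩).2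
    omega
  · rw [dif_neg hi, dif_neg hi, compl_val]
    have := (τ ⟨(i:ℕ) - m, by have := i.2; omega⟩).2
    omega

lemma compl_skewSum {m n : ℕ} (σ : Perm (Fin m)) (τ : Perm (Fin n)) :
    compl (skewSum σ τ) = directSum (compl σ) (compl τ) := by
  apply Equiv.ext; intro i; apply Fin.ext
  rw [compl_val, directSum_apply, skewSum_apply]
  by_cases hi : (i:ℕ) < m
  · rw [dif_pos hi, dif_pos hi, compl_val]
    have := (σ ⟨(i:ℕ), hi⟩).2
    omega
  · rw [dif_neg hi, dif_neg hi, compl_val]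
    have := (τ ⟨(i:ℕ) - m, by have := i.2; omega⟩).2
    omega

lemma compl_sep {N : ℕ} {π : Perm (Fin N)} (h : IsSepPerm π) : IsSepPerm (compl π) := by
  induction h with
  | single =>
    have : compl (1 : Perm (Fin 1)) = 1 := Subsingleton.elim _ _
    rw [this]
    exact IsSepPerm.single
  | dsum hσ hτ ihσ ihτ => rw [compl_directSum]; exact IsSepPerm.ssum ihσ ihτ
  | ssum hσ hτ ihσ ihτ => rw [compl_skewSum]; exact IsSepPerm.dsum ihσ ihτ

lemma brk_compl_iff {N : ℕ} (π : Perm (Fin N)) {k : ℕ} (hk : k ≤ N) :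
    brk (compl π) k ↔ mbrk π k := by
  constructor <;> intro h i hi
  · have := h i hi
    rw [compl_val] at this
    have h2 := (π i).2
    omega
  · have := h i hi
    rw [compl_val]
    have h2 := (π i).2
    omega

lemma PDec_compl_iff {N : ℕ} (π : Perm (Fin N)) : PDec (compl π) ↔ MDec π := by
  constructor <;> rintro ⟨k, h0, hkN, hb⟩
  · exact ⟨k, h0, hkN, (brk_compl_iff π (le_of_lt hkN)).1 hb⟩
  · exact ⟨k, h0, hkN, (brk_compl_iff π (le_of_lt hkN)).2 hb⟩

lemma MDec_compl_iff {N : ℕ} (π : Perm (Fin N)) : MDec (compl π) ↔ PDec π := by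
  rw [← PDec_compl_iff (compl π), compl_compl]

open Classical in
noncomputable def subSplit {α : Type*} (P Q : α → Prop) :
    {x // P x ∧ Q x} ⊕ {x // P x ∧ ¬ Q x} ≃ {x // P x} where
  toFun := Sum.elim (fun x => ⟨x.1, x.2.1⟩) (fun x => ⟨x.1, x.2.1⟩)
  invFun x := if h : Q x.1 then .inl ⟨x.1, x.2, h⟩ else .inr ⟨x.1, x.2, h⟩
  left_inv := by
    rintro (⟨x, hP, hQ⟩ | ⟨x, hP, hQ⟩) <;> simp [hQ]
  right_inv := by
    rintro ⟨x, hP⟩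
    by_cases h : Q x <;> simp [h]

noncomputable def pI (n : ℕ) : ℕ := Nat.card {π : Perm (Fin n) // IsSepPerm π ∧ ¬ PDec π}

noncomputable def pD (n : ℕ) : ℕ := Nat.card {π : Perm (Fin n) // IsSepPerm π ∧ PDec π}

lemma sepCount_split (n : ℕ) : sepCount n = pD n + pI n := by
  rw [sepCount, pD, pI, ← Nat.card_sum]
  exact (Nat.card_congr (subSplit IsSepPerm PDec)).symm

lemma sepCount_zero : sepCount 0 = 0 := by
  have : IsEmpty {π : Perm (Fin 0) // IsSepPerm π} :=
    ⟨fun x => by have := sep_pos x.2; omega⟩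
  rw [sepCount]
  exact Nat.card_of_isEmpty

lemma sepCount_one : sepCount 1 = 1 := by
  rw [sepCount, Nat.card_eq_one_iff_unique]
  constructor
  · constructor
    intro a b
    apply Subtype.ext
    apply Subsingleton.elim
  · exact ⟨⟨1, IsSepPerm.single⟩⟩

lemma not_PDec_one {π : Perm (Fin 1)} : ¬ PDec π := by
  rintro ⟨k, h0, hk, _⟩; omega

lemma pI_one : pI 1 = 1 := by
  rw [pI, Nat.card_eq_one_iff_unique]
  constructor
  · constructor
    intro a b
    apply Subtype.ext
    apply Subsingleton.elim
  · exact ⟨⟨1, IsSepPerm.single, not_PDec_one⟩⟩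

lemma not_PDec_iff_MDec {n : ℕ} (hn : 2 ≤ n) {π : Perm (Fin n)} (hs : IsSepPerm π) :
    ¬ PDec π ↔ MDec π := by
  constructor
  · intro h
    rcases sep_PDec_or_MDec hs hn with h' | h'
    · exact absurd h' h
    · exact h'
  · intro h hP
    exact not_PDec_and_MDec π ⟨hP, h⟩

noncomputable def complEquiv (n : ℕ) :
    {π : Perm (Fin n) // IsSepPerm π ∧ MDec π} ≃ {π : Perm (Fin n) // IsSepPerm π ∧ PDec π} where
  toFun x := ⟨compl x.1, compl_sep x.2.1, (PDec_compl_iff x.1).2 x.2.2⟩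
  invFun y := ⟨compl y.1, compl_sep y.2.1, (MDec_compl_iff y.1).2 y.2.2⟩
  left_inv x := Subtype.ext (compl_compl x.1)
  right_inv y := Subtype.ext (compl_compl y.1)

lemma pI_eq_pD {n : ℕ} (hn : 2 ≤ n) : pI n = pD n := by
  rw [pI, pD]
  apply Nat.card_congr
  exact (Equiv.subtypeEquivRight (fun π => by
    constructor
    · rintro ⟨hs, hnp⟩
      exact ⟨hs, (not_PDec_iff_MDec hn hs).1 hnp⟩
    · rintro ⟨hs, hm⟩
      exact ⟨hs, (not_PDec_iff_MDec hn hs).2 hm⟩)).trans (complEquiv n)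

lemma sepCount_eq_two_pD {n : ℕ} (hn : 2 ≤ n) : sepCount n = 2 * pD n := by
  rw [sepCount_split, pI_eq_pD hn]
  omega

lemma directSum_inj {σ σ' : Perm (Fin m)} {τ τ' : Perm (Fin n)}
    (h : directSum σ τ = directSum σ' τ') : σ = σ' ∧ τ = τ' := by
  constructor
  · apply Equiv.ext; intro i; apply Fin.ext
    have hi : ((⟨(i:ℕ), by omega⟩ : Fin (m+n)) : ℕ) < m := i.2
    have h2 := congrArg (fun (p : Perm (Fin (m+n))) => (p ⟨(i:ℕ), by omega⟩ : ℕ)) h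
    rw [directSum_apply_lt _ _ _ hi, directSum_apply_lt _ _ _ hi] at h2
    simpa using h2
  · apply Equiv.ext; intro i; apply Fin.ext
    have hi : ¬ ((⟨m + (i:ℕ), by omega⟩ : Fin (m+n)) : ℕ) < m := by simp
    have h2 := congrArg (fun (p : Perm (Fin (m+n))) => (p ⟨m + (i:ℕ), by omega⟩ : ℕ)) h
    rw [directSum_apply_ge _ _ _ hi, directSum_apply_ge _ _ _ hi] at h2
    have e1 := appc τ ⟨((⟨m + (i:ℕ), by omega⟩ : Fin (m+n)) : ℕ) - m, by simp⟩
      ⟨(i:ℕ), i.2⟩ (by simp)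
    have e2 := appc τ' ⟨((⟨m + (i:ℕ), by omega⟩ : Fin (m+n)) : ℕ) - m, by simp⟩
      ⟨(i:ℕ), i.2⟩ (by simp)
    rw [e1, e2] at h2
    have : ((τ ⟨(i:ℕ), i.2⟩ : Fin n) : ℕ) = ((τ' ⟨(i:ℕ), i.2⟩ : Fin n) : ℕ) := by omega
    calc ((τ i : Fin n) : ℕ) = ((τ ⟨(i:ℕ), i.2⟩ : Fin n) : ℕ) := appc τ _ _ rfl
    _ = ((τ' ⟨(i:ℕ), i.2⟩ : Fin n) : ℕ) := this
    _ = ((τ' i : Fin n) : ℕ) := appc τ' _ _ rfl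

/-- glue a pair at position `k`. -/
def glue (n k : ℕ) (hk : k ∈ Finset.Ico 1 n) (σ : Perm (Fin k)) (τ : Perm (Fin (n - k))) :
    Perm (Fin n) :=
  (finCongr (by have := Finset.mem_Ico.1 hk; omega : k + (n - k) = n)).permCongr (directSum σ τ)

lemma glue_sep {n k : ℕ} (hk : k ∈ Finset.Ico 1 n) {σ : Perm (Fin k)} {τ : Perm (Fin (n - k))}
    (hσ : IsSepPerm σ) (hτ : IsSepPerm τ) : IsSepPerm (glue n k hk σ τ) :=
  isSep_cast _ (IsSepPerm.dsum hσ hτ)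

lemma glue_brk {n k : ℕ} (hk : k ∈ Finset.Ico 1 n) (σ : Perm (Fin k)) (τ : Perm (Fin (n - k))) :
    brk (glue n k hk σ τ) k := by
  rw [glue, brk_cast]
  exact brk_directSum σ τ

lemma glue_not_brk {n k : ℕ} (hk : k ∈ Finset.Ico 1 n) {σ : Perm (Fin k)}
    {τ : Perm (Fin (n - k))} (hσ : ¬ PDec σ) {j : ℕ} (hj0 : 0 < j) (hjk : j < k) :
    ¬ brk (glue n k hk σ τ) j := by
  rw [glue, brk_cast, brk_directSum_left (le_of_lt hjk)]
  intro hb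
  exact hσ ⟨j, hj0, hjk, hb⟩

lemma glue_PDec {n k : ℕ} (hk : k ∈ Finset.Ico 1 n) (σ : Perm (Fin k))
    (τ : Perm (Fin (n - k))) : PDec (glue n k hk σ τ) := by
  have h := Finset.mem_Ico.1 hk
  exact ⟨k, by omega, by omega, glue_brk hk σ τ⟩

lemma glue_eq_k {n k l : ℕ} (hk : k ∈ Finset.Ico 1 n) (hl : l ∈ Finset.Ico 1 n)
    {σ : Perm (Fin k)} {τ : Perm (Fin (n - k))} {σ' : Perm (Fin l)} {τ' : Perm (Fin (n - l))}
    (hσ : ¬ PDec σ) (hσ' : ¬ PDec σ')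
    (h : glue n k hk σ τ = glue n l hl σ' τ') : k = l := by
  have hk' := Finset.mem_Ico.1 hk
  have hl' := Finset.mem_Ico.1 hl
  rcases lt_trichotomy k l with hkl | hkl | hkl
  · exfalso
    apply glue_not_brk hl hσ' (by omega : 0 < k) hkl
    rw [← h]
    exact glue_brk hk σ τ
  · exact hkl
  · exfalso
    apply glue_not_brk hk hσ (by omega : 0 < l) hkl
    rw [h]
    exact glue_brk hl σ' τ'

lemma glue_inj {n k : ℕ} (hk : k ∈ Finset.Ico 1 n) {σ σ' : Perm (Fin k)}
    {τ τ' : Perm (Fin (n - k))}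
    (h : glue n k hk σ τ = glue n k hk σ' τ') : σ = σ' ∧ τ = τ' := by
  rw [glue, glue] at h
  exact directSum_inj ((finCongr _).permCongr.injective h)

/-- the decomposition type. -/
def decType (n : ℕ) : Type :=
  Σ k : (Finset.Ico 1 n), ({σ : Perm (Fin (k:ℕ)) // IsSepPerm σ ∧ ¬ PDec σ} ×
    {τ : Perm (Fin (n - (k:ℕ))) // IsSepPerm τ})

noncomputable def decF {n : ℕ} (x : decType n) :
    {π : Perm (Fin n) // IsSepPerm π ∧ PDec π} :=
  ⟨glue n (x.1 : ℕ) x.1.2 x.2.1.1 x.2.2.1,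
    glue_sep _ x.2.1.2.1 x.2.2.2, glue_PDec _ _ _⟩

lemma brk_of_brk_cutL {N b j : ℕ} {π : Perm (Fin N)} (hb : brk π b) (hbn : b ≤ N)
    (hjb : j ≤ b) (h : brk (cutL π b hb hbn) j) : brk π j := by
  intro i hi
  have hib : (i : ℕ) < b := by omega
  have := h ⟨(i:ℕ), hib⟩ hi
  rw [cutL_apply] at this
  calc (π i : ℕ) = (π ⟨((⟨(i:ℕ), hib⟩ : Fin b) : ℕ), by omega⟩ : ℕ) := appc π _ _ rfl
  _ < j := this

lemma decF_bijective (n : ℕ) : Function.Bijective (decF (n := n)) := by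
  constructor
  · rintro ⟨⟨k, hk⟩, ⟨σ, hσ⟩, ⟨τ, hτ⟩⟩ ⟨⟨l, hl⟩, ⟨σ', hσ'⟩, ⟨τ', hτ'⟩⟩ h
    rw [Subtype.ext_iff] at h
    simp only [decF] at h
    have hkl : k = l := glue_eq_k hk hl hσ.2 hσ'.2 h
    subst hkl
    obtain ⟨h1, h2⟩ := glue_inj hk h
    subst h1; subst h2
    rfl
  · rintro ⟨π, hs, hd⟩
    classical
    have hex : ∃ j, 0 < j ∧ j < n ∧ brk π j := hd
    set b := Nat.find hex with hbdef
    obtain ⟨hb0, hbn, hbrk⟩ := Nat.find_spec hex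
    have hmem : b ∈ Finset.Ico 1 n := Finset.mem_Ico.2 ⟨hb0, hbn⟩
    have hcut := cut_sep hs b hb0 hbn hbrk
    have hnd : ¬ PDec (cutL π b hbrk (le_of_lt hbn)) := by
      rintro ⟨j, hj0, hjb, hbj⟩
      exact Nat.find_min hex (show j < b from hjb)
        ⟨hj0, by omega, brk_of_brk_cutL hbrk (le_of_lt hbn) (le_of_lt hjb) hbj⟩
    refine ⟨⟨⟨b, hmem⟩, ⟨cutL π b hbrk (le_of_lt hbn), hcut.1, hnd⟩, ⟨cutH π b hbrk, hcut.2⟩⟩, ?_⟩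
    apply Subtype.ext
    simp only [decF]
    exact (cut_recon π b hbrk (le_of_lt hbn)).symm

lemma card_sigma' {s : Finset ℕ} (f : ℕ → Type*) [hf : ∀ i, Finite (f i)] :
    Nat.card (Σ k : s, f (k:ℕ)) = ∑ k ∈ s, Nat.card (f k) := by
  classical
  letI : ∀ k : s, Fintype (f (k:ℕ)) := fun k => Fintype.ofFinite _
  rw [Nat.card_eq_fintype_card, Fintype.card_sigma]
  rw [← Finset.sum_coe_sort s (fun k => Nat.card (f k))]
  congr 1
  ext k
  rw [Nat.card_eq_fintype_card]

lemma pD_eq (n : ℕ) : pD n = ∑ k ∈ Finset.Ico 1 n, pI k * sepCount (n - k) := by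
  rw [pD, ← Nat.card_eq_of_bijective _ (decF_bijective n)]
  rw [decType, card_sigma' (fun k => ({σ : Perm (Fin k) // IsSepPerm σ ∧ ¬ PDec σ} ×
    {τ : Perm (Fin (n - k)) // IsSepPerm τ}))]
  congr 1
  ext k
  rw [Nat.card_prod, pI, sepCount]

lemma key_rec {n : ℕ} (hn : 2 ≤ n) :
    sepCount n = sepCount (n - 1) + ∑ k ∈ Finset.Ico 1 n, sepCount k * sepCount (n - k) := by
  have hIco : Finset.Ico 1 n = insert 1 (Finset.Ico 2 n) := by
    ext j; simp [Finset.mem_Ico]; omega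
  have h2 : ∑ k ∈ Finset.Ico 2 n, 2 * (pI k * sepCount (n - k))
      = ∑ k ∈ Finset.Ico 2 n, sepCount k * sepCount (n - k) := by
    apply Finset.sum_congr rfl
    intro k hk
    have hk2 : 2 ≤ k := (Finset.mem_Ico.1 hk).1
    rw [sepCount_eq_two_pD hk2, ← pI_eq_pD hk2]
    ring
  rw [sepCount_eq_two_pD hn, pD_eq, hIco, Finset.sum_insert (by simp), pI_one, one_mul,
    Finset.sum_insert (by simp), sepCount_one, one_mul, Nat.mul_add, Finset.mul_sum]
  simp_rw [h2]
  omega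

end SepAux

open SepAux PowerSeries in
theorem separable_gf_schroeder' :
    (2 • Sgf - (3 - PowerSeries.X)) ^ 2 =
      1 - 6 * PowerSeries.X + PowerSeries.X ^ 2 := by
  have key : Sgf * Sgf + (PowerSeries.C (R := ℚ)) 2 + PowerSeries.X * Sgf
      = (PowerSeries.C (R := ℚ)) 3 * Sgf := by
    ext n
    rw [map_add, map_add, PowerSeries.coeff_mul, PowerSeries.coeff_C, PowerSeries.coeff_C_mul]
    rcases n with _ | m
    · simp [Sgf]
      norm_num
    · rw [PowerSeries.coeff_succ_X_mul]
      rw [Finset.Nat.sum_antidiagonal_eq_sum_range_succ_mk]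
      simp only [Sgf, PowerSeries.coeff_mk, if_neg (Nat.succ_ne_zero m), Nat.succ_ne_zero,
        if_false, add_zero]
      rcases Nat.eq_zero_or_pos m with rfl | hm
      · rw [Finset.sum_range_succ, Finset.sum_range_succ, Finset.sum_range_zero]
        simp [sepCount_one]
        norm_num
      · -- n = m + 1 ≥ 2
        have hn2 : 2 ≤ m + 1 := by omega
        have hrecN := key_rec hn2
        have hre : ∑ k ∈ Finset.Ico 1 (m+1), sepCount k * sepCount (m + 1 - k)
            = ∑ k ∈ Finset.range m, sepCount (k+1) * sepCount (m - k) := by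
          rw [Finset.sum_Ico_eq_sum_range]
          apply Finset.sum_congr (by congr 1)
          intro k hk
          have : 1 + k = k + 1 := by omega
          rw [this]
          congr 2
          omega
        rw [hre] at hrecN
        simp only [Nat.add_sub_cancel] at hrecN
        -- now the ℚ computation
        rw [Finset.sum_range_succ, Finset.sum_range_succ']
        have hc0 : (if m + 1 = 0 then (1:ℚ) else sepCount (m+1)) = sepCount (m+1) := by simp
        have hcm : (if m = 0 then (1:ℚ) else sepCount m) = sepCount m := by
          simp [Nat.pos_iff_ne_zero.1 hm]
        have hsum : ∀ x ∈ Finset.range m,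
            (if x + 1 = 0 then (1:ℚ) else sepCount (x+1)) *
              (if m + 1 - (x + 1) = 0 then (1:ℚ) else sepCount (m + 1 - (x+1)))
            = (sepCount (x+1) * sepCount (m - x) : ℚ) := by
          intro x hx
          have hx' := Finset.mem_range.1 hx
          rw [if_neg (by omega), if_neg (by omega)]
          congr 3
          omega
        rw [Finset.sum_congr rfl hsum]
        simp only [Nat.sub_zero, Nat.sub_self, if_pos rfl, hc0, hcm, mul_one, one_mul]
        have hQ : (sepCount (m+1) : ℚ)
            = sepCount m + ∑ k ∈ Finset.range m, (sepCount (k+1) : ℚ) * sepCount (m - k) := by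
          rw [hrecN]
          push_cast
          ring
        rw [hQ]
        simp only [if_true]
        ring
  have c2 : ((PowerSeries.C (R := ℚ)) 2 : PowerSeries ℚ) = 2 := by
    rw [map_ofNat]
  have c3 : ((PowerSeries.C (R := ℚ)) 3 : PowerSeries ℚ) = 3 := by
    rw [map_ofNat]
  rw [c2, c3] at key
  have h2 : (2 • Sgf : PowerSeries ℚ) = 2 * Sgf := by
    rw [nsmul_eq_mul]
    norm_num
  rw [h2]
  linear_combination (4 : PowerSeries ℚ) * key


/-- The number of separable permutations of length `n` is the `n`-th large Schröder
number, i.e. `S = (3 - t - √(1 - 6t + t²))/2`, rendered as `(2S - (3 - t))² = 1 - 6t + t²`. -/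
theorem separable_gf_schroeder :
    (2 • Sgf - (3 - PowerSeries.X)) ^ 2 =
      1 - 6 * PowerSeries.X + PowerSeries.X ^ 2 :=
  separable_gf_schroeder'
end
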